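/- arXiv:2604.18619 — 2 statements merged into one kernel-verified Lean document; each statement's English description precedes it below -/
import Mathlib

section
/- For positive integers N and n, the following are equivalent: (1) there exist a natural number k and a finite set P of non-negative integers such that n·k = N, P has exactly n elements, and the elements of P sum to N; (2) n divides N and n(n-1)/2 ≤ N. -/
lemma sum_range_card_le (P : Finset ℕ) : ∑ i ∈ Finset.range P.card, i ≤ ∑ x ∈ P, x := by
  induction P using Finset.strongInduction with
  | _ P ih =>
    rcases P.eq_empty_or_nonempty with h | h
    · simp [h]
    · set M := P.max' h with hMdef
      have hMmem : M ∈ P := P.max'_mem h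
      have hsub : P ⊆ Finset.range (M + 1) := fun x hx =>
        Finset.mem_range.2 (Nat.lt_succ_of_le (P.le_max' x hx))
      have hcard : P.card ≤ M + 1 := by
        simpa using Finset.card_le_card hsub
      have hrec := ih (P.erase M) (Finset.erase_ssubset hMmem)
      have hce : (P.erase M).card = P.card - 1 := Finset.card_erase_of_mem hMmem
      have hpos : 0 < P.card := Finset.card_pos.2 h
      obtain ⟨m, hm⟩ : ∃ m, P.card = m + 1 := ⟨P.card - 1, (Nat.succ_pred_eq_of_pos hpos).symm⟩
      have hsum : ∑ x ∈ P, x = M + ∑ x ∈ P.erase M, x := (Finset.add_sum_erase P id hMmem).symm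
      rw [hsum, hm, Finset.sum_range_succ]
      have hmle : m ≤ M := by omega
      have : ∑ i ∈ Finset.range m, i ≤ ∑ x ∈ P.erase M, x := by
        rw [hce, hm] at hrec; simpa using hrec
      omega

/-- `n` baskets admit a valid apple-and-pear arrangement for `N` apples and
`N` pears iff `n ∣ N` and `n*(n-1)/2 ≤ N`. -/
theorem admissible_iff (N n : ℕ) (hN : 0 < N) (hn : 0 < n) :
    (∃ (k : ℕ) (P : Finset ℕ), n * k = N ∧ P.card = n ∧ ∑ x ∈ P, x = N) ↔
    (n ∣ N ∧ n * (n - 1) / 2 ≤ N) := by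
  constructor
  · rintro ⟨k, P, hk, hcard, hsum⟩
    refine ⟨⟨k, hk.symm⟩, ?_⟩
    have := sum_range_card_le P
    rw [hcard, Finset.sum_range_id] at this
    omega
  · rintro ⟨⟨k, hk⟩, hle⟩
    obtain ⟨m, hm⟩ : ∃ m, n = m + 1 := ⟨n - 1, (Nat.succ_pred_eq_of_pos hn).symm⟩
    set s := ∑ i ∈ Finset.range m, i with hs
    have hsn : ∑ i ∈ Finset.range n, i = s + m := by rw [hm, Finset.sum_range_succ]
    have hNge : s + m ≤ N := by
      rw [← hsn, Finset.sum_range_id]; omega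
    have hnotmem : N - s ∉ Finset.range m := by
      simp only [Finset.mem_range]; omega
    refine ⟨k, insert (N - s) (Finset.range m), hk.symm, ?_, ?_⟩
    · rw [Finset.card_insert_of_notMem hnotmem, Finset.card_range, hm]
    · rw [Finset.sum_insert hnotmem, ← hs]; omega
end

section
/- Fix a positive integer n. For natural numbers S ≤ S', the number of finite sets of exactly n distinct non-negative integers summing to n(n-1)/2 + S is at most the number of finite sets of exactly n distinct non-negative integers summing to n(n-1)/2 + S'; and for every S this number is at least 1. -/
lemma setFinite (n M : ℕ) :
    {T : Finset ℕ | T.card = n ∧ ∑ x ∈ T, x = M}.Finite := by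
  apply ((Finset.range (M+1)).powerset.finite_toSet).subset
  rintro T ⟨-, hsum⟩
  simp only [Finset.mem_coe, Finset.mem_powerset]
  intro x hx
  have : x ≤ ∑ y ∈ T, y := Finset.single_le_sum (fun i _ => Nat.zero_le i) hx
  simp only [Finset.mem_range]
  omega

def fmap (d : ℕ) (T : Finset ℕ) : Finset ℕ :=
  if h : T.Nonempty then insert (T.max' h + d) (T.erase (T.max' h)) else ∅

lemma notMem_erase_max (d : ℕ) (T : Finset ℕ) (h : T.Nonempty) :
    T.max' h + d ∉ T.erase (T.max' h) := by
  intro hmem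
  have h1 := T.le_max' _ (Finset.mem_of_mem_erase hmem)
  have h2 : T.max' h + d = T.max' h := by omega
  rw [h2] at hmem
  exact (Finset.notMem_erase _ _) hmem

lemma fmap_card (d : ℕ) (T : Finset ℕ) (h : T.Nonempty) :
    (fmap d T).card = T.card := by
  rw [fmap, dif_pos h, Finset.card_insert_of_notMem (notMem_erase_max d T h),
    Finset.card_erase_of_mem (T.max'_mem h)]
  have := Finset.card_pos.mpr h
  omega

lemma fmap_sum (d : ℕ) (T : Finset ℕ) (h : T.Nonempty) :
    ∑ x ∈ fmap d T, x = (∑ x ∈ T, x) + d := by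
  rw [fmap, dif_pos h, Finset.sum_insert (notMem_erase_max d T h)]
  have hm := T.max'_mem h
  have hle : T.max' h ≤ ∑ x ∈ T, x :=
    Finset.single_le_sum (fun i _ => Nat.zero_le i) hm
  have := Finset.sum_erase_add T id hm
  simp only [id] at this
  omega

lemma fmap_max (d : ℕ) (T : Finset ℕ) (h : T.Nonempty) (h' : (fmap d T).Nonempty) :
    (fmap d T).max' h' = T.max' h + d := by
  apply le_antisymm
  · apply Finset.max'_le
    intro y hy
    rw [fmap, dif_pos h, Finset.mem_insert] at hy
    rcases hy with rfl | hy
    · exact le_rfl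
    · have := T.le_max' y (Finset.mem_of_mem_erase hy)
      omega
  · apply Finset.le_max'
    rw [fmap, dif_pos h]
    exact Finset.mem_insert_self _ _

lemma fmap_rec (d : ℕ) (T : Finset ℕ) (h : T.Nonempty) :
    insert (T.max' h) ((fmap d T).erase (T.max' h + d)) = T := by
  rw [fmap, dif_pos h, Finset.erase_insert (notMem_erase_max d T h),
    Finset.insert_erase (T.max'_mem h)]

/-- The number of sets of `n` distinct non-negative integers summing to
`n*(n-1)/2 + S` is nondecreasing in the surplus `S`, and is at least `1`. -/
theorem surplus_count_mono (n : ℕ) (hn : 0 < n) (S S' : ℕ) (hSS' : S ≤ S') :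
    {T : Finset ℕ | T.card = n ∧ ∑ x ∈ T, x = n * (n - 1) / 2 + S}.ncard ≤
      {T : Finset ℕ | T.card = n ∧ ∑ x ∈ T, x = n * (n - 1) / 2 + S'}.ncard ∧
    1 ≤ {T : Finset ℕ | T.card = n ∧ ∑ x ∈ T, x = n * (n - 1) / 2 + S}.ncard := by
  constructor
  · set d := S' - S with hd
    apply Set.ncard_le_ncard_of_injOn (fmap d) ?_ ?_ ((setFinite n _).to_subtype)
    · rintro T ⟨hcard, hsum⟩
      have hne : T.Nonempty := Finset.card_pos.mp (by omega)
      exact ⟨by rw [fmap_card d T hne, hcard], by rw [fmap_sum d T hne, hsum]; omega⟩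
    · rintro T1 ⟨hc1, -⟩ T2 ⟨hc2, -⟩ heq
      have h1 : T1.Nonempty := Finset.card_pos.mp (by omega)
      have h2 : T2.Nonempty := Finset.card_pos.mp (by omega)
      have h1' : (fmap d T1).Nonempty := by
        apply Finset.card_pos.mp; rw [fmap_card d T1 h1]; omega
      have h2' : (fmap d T2).Nonempty := heq ▸ h1'
      have hmax : T1.max' h1 = T2.max' h2 := by
        have e1 := fmap_max d T1 h1 h1'
        have e2 := fmap_max d T2 h2 h2'
        have e4 : (fmap d T1).max' h1' = (fmap d T2).max' h2' := by
          simp only [heq]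
        omega
      rw [← fmap_rec d T1 h1, ← fmap_rec d T2 h2, heq, hmax]
  · rw [Nat.one_le_iff_ne_zero, ← Nat.pos_iff_ne_zero,
      Set.ncard_pos (setFinite n _)]
    obtain ⟨k, rfl⟩ : ∃ k, n = k + 1 := ⟨n - 1, by omega⟩
    refine ⟨insert (k + S) (Finset.range k), ?_, ?_⟩
    · rw [Finset.card_insert_of_notMem (by simp), Finset.card_range]
    · rw [Finset.sum_insert (by simp)]
      have h1 : ∑ x ∈ Finset.range k, x = k * (k - 1) / 2 := Finset.sum_range_id k
      have h2 : ∑ x ∈ Finset.range (k+1), x = (k+1) * k / 2 := Finset.sum_range_id (k+1)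
      rw [Finset.sum_range_succ] at h2
      simp only [Nat.add_sub_cancel]
      omega
end
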